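/- Let U, V₁, …, V_k be open ℝ₊-connected subsets of X. Then the set U ∪ ⋃_{i=1}^{k} (V_i ∩ ℝ₊(U ∩ V_i)) is ℝ₊-connected. (The k-set generalization of Lemma 1.17 of the paper, used in the proof of the refinement Lemma 1.16.) -/

import Mathlib

/-!
On an orbit `b`, the saturation `ℝ₊(U ∩ Vᵢ)` contains either all of `b` (when `U ∩ Vᵢ` meets `b`)
or none of it. Hence the trace of the set on `b` is `U ∩ b` together with those `Vᵢ ∩ b` that meet
`U ∩ b`, and a union of preconnected sets each meeting the preconnected set `U ∩ b` is
preconnected.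
-/

/-- The multiplicative group of positive real numbers. -/
abbrev Rpos : Type := {t : ℝ // 0 < t}

/-- The saturation `ℝ₊S = {t • x : t ∈ ℝ₊, x ∈ S}` of a set `S`. -/
def RposSat {X : Type*} [SMul Rpos X] (S : Set X) : Set X :=
  {y | ∃ (t : Rpos) (x : X), x ∈ S ∧ t • x = y}

/-- A set `S` is `ℝ₊`-connected if its intersection with every orbit
`ℝ₊x = {t • x : t ∈ ℝ₊}` is connected or empty (i.e. preconnected). -/
def RposConnected {X : Type*} [TopologicalSpace X] [SMul Rpos X] (S : Set X) : Prop :=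
  ∀ x : X, IsPreconnected (S ∩ Set.range (fun t : Rpos => t • x))

/-- Every orbit is contractible: for each `x`, either `x` is a fixed point of the action,
or the orbit map `t ↦ t • x` is a homeomorphism of `ℝ₊` onto the orbit `ℝ₊x` endowed with
its subspace topology (i.e. it is a topological embedding). -/
def OrbitHyp (X : Type*) [TopologicalSpace X] [SMul Rpos X] : Prop :=
  ∀ x : X, (∀ t : Rpos, t • x = x) ∨ Topology.IsEmbedding (fun t : Rpos => t • x)

open MulAction

theorem IsPreconnected.union_iUnion_of_inter_nonempty {α ι : Type*} [TopologicalSpace α]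
    {A : Set α} {B : ι → Set α} (hA : IsPreconnected A) (hB : ∀ i, IsPreconnected (B i)) :
    IsPreconnected (A ∪ ⋃ i, ⋃ (_ : (A ∩ B i).Nonempty), B i) := by
  rcases A.eq_empty_or_nonempty with rfl | ⟨a, ha⟩
  · simpa using isPreconnected_empty
  refine isPreconnected_of_forall a ?_
  rintro y (hy | hy)
  · exact ⟨A, Set.subset_union_left, ha, hy, hA⟩
  · obtain ⟨i, hi, hyi⟩ := Set.mem_iUnion₂.1 hy
    refine ⟨A ∪ B i, Set.union_subset_union_right A (Set.subset_iUnion₂_of_subset i hi le_rfl),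
      Or.inl ha, Or.inr hyi, ?_⟩
    obtain ⟨z, hzA, hzB⟩ := hi
    exact hA.union z hzA hzB (hB i)

theorem mem_RposSat_iff_of_mem_orbit {X : Type*} [MulAction Rpos X] {T : Set X} {x y : X}
    (hy : y ∈ orbit Rpos x) : y ∈ RposSat T ↔ (T ∩ orbit Rpos x).Nonempty := by
  have hsat : y ∈ RposSat T ↔ ∃ z ∈ T, y ∈ orbit Rpos z := by
    simp only [RposSat, Set.mem_ofPred_eq, mem_orbit_iff]
    exact ⟨fun ⟨t, z, hz, h⟩ => ⟨z, hz, t, h⟩, fun ⟨z, hz, t, h⟩ => ⟨t, z, hz, h⟩⟩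
  rw [hsat, ← orbit_eq_iff.2 hy]
  exact exists_congr fun z => and_congr_right fun _ => mem_orbit_symm

theorem stmt_3_general {X : Type*} [TopologicalSpace X] [MulAction Rpos X]
    (U : Set X) (hUc : RposConnected U)
    (k : ℕ) (V : Fin k → Set X) (hVc : ∀ i, RposConnected (V i)) :
    RposConnected (U ∪ ⋃ i, (V i ∩ RposSat (U ∩ V i))) := by
  intro x
  change IsPreconnected (_ ∩ orbit Rpos x)
  set b := orbit Rpos x
  have htrace : (U ∪ ⋃ i, (V i ∩ RposSat (U ∩ V i))) ∩ b =
      (U ∩ b) ∪ ⋃ i, ⋃ (_ : ((U ∩ b) ∩ (V i ∩ b)).Nonempty), V i ∩ b := by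
    ext y
    by_cases hy : y ∈ b
    · have hsat (i : Fin k) : y ∈ RposSat (U ∩ V i) ↔ ((U ∩ b) ∩ (V i ∩ b)).Nonempty := by
        rw [mem_RposSat_iff_of_mem_orbit hy, Set.inter_inter_distrib_right]
      simp only [Set.mem_inter_iff, Set.mem_union, Set.mem_iUnion, exists_prop, hsat, hy]
      tauto
    · simp [hy]
  rw [htrace]
  exact (hUc x).union_iUnion_of_inter_nonempty fun i => hVc i x

/-- The `k`-set generalization of Lemma 1.17: if `U, V₁, …, V_k` are open
`ℝ₊`-connected subsets of `X`, then `U ∪ ⋃_{i=1}^{k} (V_i ∩ ℝ₊(U ∩ V_i))`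
is `ℝ₊`-connected. -/
theorem stmt_3 {X : Type*} [TopologicalSpace X] [MulAction Rpos X] [ContinuousSMul Rpos X]
    (horb : OrbitHyp X) (U : Set X) (hUo : IsOpen U) (hUc : RposConnected U)
    (k : ℕ) (V : Fin k → Set X) (hVo : ∀ i, IsOpen (V i)) (hVc : ∀ i, RposConnected (V i)) :
    RposConnected (U ∪ ⋃ i, (V i ∩ RposSat (U ∩ V i))) :=
  stmt_3_general U hUc k V hVc
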